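/- Let F be the CDF of the symmetric Pareto distribution with shape 2 and f its density (f(x) = 1/(|x|+1)^3). For all c ≥ 0, ∫_{-∞}^∞ (-f'(z+c)) · F(z) · F(z+c) dz ≥ F(-c) · ∫_{-∞}^∞ f(z)^2 dz, where f' denotes the derivative of f (taken piecewise off 0). -/

import Mathlib

open Real MeasureTheory

/-- Density of the symmetric Pareto distribution with shape 2. -/
noncomputable def sParetoPdf (x : ℝ) : ℝ := 1 / (|x| + 1) ^ 3

/-- Piecewise derivative (off 0) of the symmetric Pareto density with shape 2. -/
noncomputable def sParetoPdf' (x : ℝ) : ℝ :=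
  if x < 0 then 3 / (1 - x) ^ 4 else -3 / (x + 1) ^ 4

/-- CDF of the symmetric Pareto distribution with shape 2. -/
noncomputable def sParetoCdf (x : ℝ) : ℝ :=
  if x < 0 then 1 / (2 * (1 - x) ^ 2) else 1 - 1 / (2 * (x + 1) ^ 2)

open Set Filter Topology

/-! With `u = z + c`, the factor `-f'(u)` has the sign of `u`, and `u ≥ 0` exactly when
`z ≥ -c`; so monotonicity of `F` gives `-f'(u) F(z) F(u) ≥ F(-c) · (-f'(u) F(u))` pointwise.
Integrating and translating by `c` bounds the left side below by
`F(-c) ∫ -f' F`, and `∫ -f' F = ∫ f²` (integration by parts; here both equal `2/5`). -/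

theorem integral_Ioi_add_one_rpow {a : ℝ} (ha : a < -1) :
    ∫ z in Ioi (0 : ℝ), (z + 1) ^ a = -1 / (a + 1) := by
  have hd : ∀ x ∈ Ici (0 : ℝ),
      HasDerivAt (fun t ↦ (t + 1) ^ (a + 1) / (a + 1)) ((x + 1) ^ a) x := by
    intro x hx
    have hx1 : x + 1 ≠ 0 := by linarith [mem_Ici.mp hx]
    refine ((((hasDerivAt_id x).add_const 1).rpow_const (p := a + 1)
      (Or.inl hx1)).div_const (a + 1)).congr_deriv ?_
    field_simp [show a + 1 ≠ 0 by linarith]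
    simp
  have ht : Tendsto (fun t : ℝ ↦ (t + 1) ^ (a + 1) / (a + 1)) atTop (𝓝 (0 / (a + 1))) := by
    rw [← neg_neg (a + 1)]
    exact (tendsto_rpow_neg_atTop (by linarith)).comp
      (tendsto_atTop_add_const_right _ 1 tendsto_id) |>.div_const _
  rw [integral_Ioi_of_hasDerivAt_of_tendsto' hd
    (integrableOn_add_rpow_Ioi_of_lt ha (by norm_num)) ht]
  simp [neg_div]

theorem inv_add_one_pow_eq_rpow (n : ℕ) :
    (fun z : ℝ ↦ ((z + 1) ^ n)⁻¹) = fun z ↦ (z + 1) ^ (-(n : ℝ)) :=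
  funext fun z ↦ by rw [rpow_neg_natCast, zpow_neg, zpow_natCast]

theorem integrableOn_Ici_inv_add_one_pow {n : ℕ} (hn : 2 ≤ n) :
    IntegrableOn (fun z : ℝ ↦ ((z + 1) ^ n)⁻¹) (Ici 0) := by
  have hn' : (2 : ℝ) ≤ n := by exact_mod_cast hn
  rw [integrableOn_Ici_iff_integrableOn_Ioi, inv_add_one_pow_eq_rpow]
  exact integrableOn_add_rpow_Ioi_of_lt (by linarith) (by norm_num)

theorem integral_Ici_inv_add_one_pow {n : ℕ} (hn : 2 ≤ n) :
    ∫ z in Ici (0 : ℝ), ((z + 1) ^ n)⁻¹ = 1 / (n - 1) := by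
  have hn' : (2 : ℝ) ≤ n := by exact_mod_cast hn
  rw [integral_Ici_eq_integral_Ioi, inv_add_one_pow_eq_rpow,
    integral_Ioi_add_one_rpow (by linarith), neg_div, ← div_neg]
  ring

theorem integral_Iio_inv_one_sub_pow {n : ℕ} (hn : 2 ≤ n) :
    ∫ z in Iio (0 : ℝ), ((1 - z) ^ n)⁻¹ = 1 / (n - 1) := by
  rw [← integral_Iic_eq_integral_Iio, ← neg_zero, ← integral_comp_neg_Ioi,
    ← integral_Ici_inv_add_one_pow hn, integral_Ici_eq_integral_Ioi]
  simp only [sub_neg_eq_add, add_comm (1 : ℝ)]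

theorem sParetoCdf_nonneg (x : ℝ) : 0 ≤ sParetoCdf x := by
  unfold sParetoCdf
  split_ifs with hx
  · positivity
  · have : 1 / (2 * (x + 1) ^ 2) ≤ 1 / (2 * 1 ^ 2) := by
      gcongr; linarith
    linarith

theorem sParetoCdf_le_one (x : ℝ) : sParetoCdf x ≤ 1 := by
  unfold sParetoCdf
  split_ifs with hx
  · have : 1 / (2 * (1 - x) ^ 2) ≤ 1 / (2 * 1 ^ 2) := by
      gcongr; linarith
    linarith
  · have : 0 ≤ 1 / (2 * (x + 1) ^ 2) := by positivity
    linarith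

theorem monotone_sParetoCdf : Monotone sParetoCdf := by
  intro a b hab
  unfold sParetoCdf
  split_ifs with ha hb hb
  · have : 0 < 1 - b := by linarith
    gcongr
  · have h₁ : 1 / (2 * (1 - a) ^ 2) ≤ 1 / (2 * 1 ^ 2) := by gcongr; linarith
    have h₂ : 1 / (2 * (b + 1) ^ 2) ≤ 1 / (2 * 1 ^ 2) := by gcongr; linarith
    linarith
  · linarith
  · have : 0 < a + 1 := by linarith
    have : 1 / (2 * (b + 1) ^ 2) ≤ 1 / (2 * (a + 1) ^ 2) := by gcongr
    linarith

theorem measurable_sParetoCdf : Measurable sParetoCdf := by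
  unfold sParetoCdf
  exact Measurable.ite measurableSet_Iio (by fun_prop) (by fun_prop)

theorem measurable_sParetoPdf' : Measurable sParetoPdf' := by
  unfold sParetoPdf'
  exact Measurable.ite measurableSet_Iio (by fun_prop) (by fun_prop)

theorem norm_sParetoCdf_le (x : ℝ) : ‖sParetoCdf x‖ ≤ 1 := by
  rw [Real.norm_of_nonneg (sParetoCdf_nonneg x)]
  exact sParetoCdf_le_one x

theorem sParetoPdf'_nonneg_of_neg {x : ℝ} (hx : x < 0) : 0 ≤ sParetoPdf' x := by
  rw [sParetoPdf', if_pos hx]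
  positivity

theorem sParetoPdf'_nonpos_of_nonneg {x : ℝ} (hx : 0 ≤ x) : sParetoPdf' x ≤ 0 := by
  rw [sParetoPdf', if_neg (not_lt.2 hx), neg_div]
  exact neg_nonpos.2 (by positivity)

theorem integrable_inv_abs_add_one_pow {n : ℕ} (hn : 2 ≤ n) :
    Integrable fun x : ℝ ↦ ((|x| + 1) ^ n)⁻¹ := by
  refine integrable_inv_one_add_sq.mono' (by fun_prop) (Eventually.of_forall fun x ↦ ?_)
  have h1 : 1 ≤ |x| + 1 := by linarith [abs_nonneg x]
  rw [norm_inv, norm_pow, Real.norm_of_nonneg (by positivity)]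
  gcongr ?_⁻¹
  calc 1 + x ^ 2 ≤ (|x| + 1) ^ 2 := by nlinarith [sq_abs x, abs_nonneg x]
    _ ≤ (|x| + 1) ^ n := pow_le_pow_right₀ h1 hn

theorem sParetoPdf_sq (x : ℝ) : sParetoPdf x ^ 2 = ((|x| + 1) ^ 6)⁻¹ := by
  rw [sParetoPdf, div_pow, one_pow, ← pow_mul, one_div]

theorem abs_sParetoPdf' (x : ℝ) : |sParetoPdf' x| = 3 * ((|x| + 1) ^ 4)⁻¹ := by
  unfold sParetoPdf'
  split_ifs with hx
  · have : 0 < 1 - x := by linarith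
    rw [abs_of_neg hx, abs_of_pos (by positivity)]
    ring
  · have : 0 < x + 1 := by linarith
    rw [abs_of_nonneg (not_lt.1 hx), neg_div, abs_neg, abs_of_pos (by positivity)]
    ring

theorem integrable_sParetoPdf' : Integrable sParetoPdf' :=
  ((integrable_inv_abs_add_one_pow (n := 4) (by norm_num)).const_mul 3).mono'
    measurable_sParetoPdf'.aestronglyMeasurable
    (Eventually.of_forall fun x ↦ (Real.norm_eq_abs _).trans_le (abs_sParetoPdf' x).le)

theorem integral_sParetoPdf_sq : ∫ z, sParetoPdf z ^ 2 = 2 / 5 := by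
  have hint : Integrable fun z ↦ sParetoPdf z ^ 2 := by
    simpa only [sParetoPdf_sq] using integrable_inv_abs_add_one_pow (n := 6) (by norm_num)
  rw [← intervalIntegral.integral_Iio_add_Ici hint.integrableOn hint.integrableOn,
    setIntegral_congr_fun measurableSet_Iio (g := fun z ↦ ((1 - z) ^ 6)⁻¹)
      (fun z hz ↦ by rw [sParetoPdf_sq, abs_of_neg hz]; ring_nf),
    setIntegral_congr_fun measurableSet_Ici (g := fun z ↦ ((z + 1) ^ 6)⁻¹)
      (fun z hz ↦ by rw [sParetoPdf_sq, abs_of_nonneg hz]),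
    integral_Iio_inv_one_sub_pow (by norm_num), integral_Ici_inv_add_one_pow (by norm_num)]
  norm_num

theorem integrable_neg_sParetoPdf'_mul_sParetoCdf :
    Integrable fun u ↦ -sParetoPdf' u * sParetoCdf u :=
  integrable_sParetoPdf'.neg.mul_bdd measurable_sParetoCdf.aestronglyMeasurable
    (Eventually.of_forall norm_sParetoCdf_le)

theorem integral_neg_sParetoPdf'_mul_sParetoCdf :
    ∫ u, -sParetoPdf' u * sParetoCdf u = 2 / 5 := by
  have hint := integrable_neg_sParetoPdf'_mul_sParetoCdf
  have hneg : EqOn (fun u ↦ -sParetoPdf' u * sParetoCdf u)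
      (fun u ↦ -(3 / 2) * ((1 - u) ^ 6)⁻¹) (Iio 0) := fun u hu ↦ by
    have : (1 - u) ≠ 0 := by linarith [mem_Iio.1 hu]
    simp only [sParetoPdf', sParetoCdf, if_pos (mem_Iio.1 hu)]
    field_simp
  have hpos : EqOn (fun u ↦ -sParetoPdf' u * sParetoCdf u)
      (fun u ↦ 3 * ((u + 1) ^ 4)⁻¹ - 3 / 2 * ((u + 1) ^ 6)⁻¹) (Ici 0) := fun u hu ↦ by
    have : (u + 1) ≠ 0 := by linarith [mem_Ici.1 hu]
    simp only [sParetoPdf', sParetoCdf, if_neg (not_lt.2 (mem_Ici.1 hu))]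
    field_simp
  rw [← intervalIntegral.integral_Iio_add_Ici hint.integrableOn hint.integrableOn,
    setIntegral_congr_fun measurableSet_Iio hneg, setIntegral_congr_fun measurableSet_Ici hpos,
    integral_sub ((integrableOn_Ici_inv_add_one_pow (by norm_num)).const_mul 3)
      ((integrableOn_Ici_inv_add_one_pow (by norm_num)).const_mul _),
    integral_const_mul, integral_const_mul, integral_const_mul,
    integral_Iio_inv_one_sub_pow (by norm_num), integral_Ici_inv_add_one_pow (by norm_num),
    integral_Ici_inv_add_one_pow (by norm_num)]
  norm_num

theorem Monotone.apply_neg_mul_le_mul_apply_of_sign {F ψ : ℝ → ℝ} (hF : Monotone F)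
    (hψ_neg : ∀ u < 0, ψ u ≤ 0) (hψ_nonneg : ∀ u, 0 ≤ u → 0 ≤ ψ u) (c z : ℝ) :
    F (-c) * ψ (z + c) ≤ ψ (z + c) * F z := by
  rw [mul_comm]
  rcases lt_or_ge (z + c) 0 with h | h
  · exact mul_le_mul_of_nonpos_left (hF (by linarith)) (hψ_neg _ h)
  · exact mul_le_mul_of_nonneg_left (hF (by linarith)) (hψ_nonneg _ h)

theorem stmt6_general (c : ℝ) :
    sParetoCdf (-c) * (∫ z : ℝ, (sParetoPdf z) ^ 2) ≤
      ∫ z : ℝ, (-(sParetoPdf' (z + c))) * sParetoCdf z * sParetoCdf (z + c) := by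
  set ψ : ℝ → ℝ := fun u ↦ -sParetoPdf' u * sParetoCdf u
  have hψ : Integrable fun z ↦ ψ (z + c) :=
    integrable_neg_sParetoPdf'_mul_sParetoCdf.comp_add_right c
  have hpoint : ∀ z, sParetoCdf (-c) * ψ (z + c) ≤ ψ (z + c) * sParetoCdf z :=
    monotone_sParetoCdf.apply_neg_mul_le_mul_apply_of_sign
      (fun u hu ↦ mul_nonpos_of_nonpos_of_nonneg
        (neg_nonpos.2 (sParetoPdf'_nonneg_of_neg hu)) (sParetoCdf_nonneg u))
      (fun u hu ↦ mul_nonneg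
        (neg_nonneg.2 (sParetoPdf'_nonpos_of_nonneg hu)) (sParetoCdf_nonneg u)) c
  calc sParetoCdf (-c) * ∫ z, sParetoPdf z ^ 2 = sParetoCdf (-c) * ∫ z, ψ (z + c) := by
        rw [integral_sParetoPdf_sq, integral_add_right_eq_self ψ,
          integral_neg_sParetoPdf'_mul_sParetoCdf]
    _ = ∫ z, sParetoCdf (-c) * ψ (z + c) := (integral_const_mul _ _).symm
    _ ≤ ∫ z, ψ (z + c) * sParetoCdf z :=
        integral_mono (hψ.const_mul _) (hψ.mul_bdd measurable_sParetoCdf.aestronglyMeasurable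
          (Eventually.of_forall norm_sParetoCdf_le)) hpoint
    _ = _ := by
        congr 1 with z
        ring

theorem stmt6 (c : ℝ) (hc : 0 ≤ c) :
    sParetoCdf (-c) * (∫ z : ℝ, (sParetoPdf z) ^ 2) ≤
      ∫ z : ℝ, (-(sParetoPdf' (z + c))) * sParetoCdf z * sParetoCdf (z + c) :=
  stmt6_general c
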